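/- Under current-action sufficiency and lag overlap, for each fixed action a, the conditional expectation E[π₀(a|X)·w_k(X⁽ᵏ⁾,a) − π_θ(a|X) | X⁽ᵏ⁾] = 0 almost surely, where w_k(x⁽ᵏ⁾,a) = π̄_θ,k(a|x⁽ᵏ⁾)/π̄₀,k(a|x⁽ᵏ⁾). -/

import Mathlib

/-!
Put `W := π̄_θ,k / π̄₀,k`, a function of `X⁽ᵏ⁾`. Pulling `W` out of the conditional expectation
and the tower property give `E[π₀ W | X⁽ᵏ⁾] = W E[𝟙{A = a} | X⁽ᵏ⁾] = W π̄₀,k = π̄_θ,k`, which is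
`E[π_θ | X⁽ᵏ⁾]`. The one delicate point is that `W π₀` is integrable although `W` may be
unbounded: as `W` is `X⁽ᵏ⁾`-measurable and `π₀ ≥ 0`, `E[|W| π₀] = E[|W| π̄₀,k] = E[|π̄_θ,k|] < ∞`.
-/

open MeasureTheory Filter
open scoped ENNReal

namespace MeasureTheory

variable {Ω : Type*} {m m₀ : MeasurableSpace Ω} {μ : Measure Ω}

theorem trim_withDensity_ofReal_condExp (hm : m ≤ m₀) [SigmaFinite (μ.trim hm)] {f : Ω → ℝ}
    (hf : Integrable f μ) (hf₀ : 0 ≤ᵐ[μ] f) :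
    (μ.withDensity fun ω => ENNReal.ofReal (μ[f | m] ω)).trim hm
      = (μ.withDensity fun ω => ENNReal.ofReal (f ω)).trim hm := by
  refine @Measure.ext _ m _ _ fun s hs => ?_
  rw [trim_measurableSet_eq hm hs, trim_measurableSet_eq hm hs, withDensity_apply _ (hm s hs),
    withDensity_apply _ (hm s hs),
    ← ofReal_integral_eq_lintegral_ofReal integrable_condExp.integrableOn
      (ae_restrict_of_ae (condExp_nonneg hf₀)),
    ← ofReal_integral_eq_lintegral_ofReal hf.integrableOn (ae_restrict_of_ae hf₀),
    setIntegral_condExp hm hf hs]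

theorem lintegral_mul_ofReal_condExp (hm : m ≤ m₀) [SigmaFinite (μ.trim hm)] {h : Ω → ℝ≥0∞}
    (hh : Measurable[m] h) {f : Ω → ℝ} (hf : Integrable f μ) (hf₀ : 0 ≤ᵐ[μ] f) :
    ∫⁻ ω, h ω * ENNReal.ofReal (μ[f | m] ω) ∂μ = ∫⁻ ω, h ω * ENNReal.ofReal (f ω) ∂μ := by
  have h_trim (g : Ω → ℝ) (hg : AEMeasurable g μ) : ∫⁻ ω, h ω * ENNReal.ofReal (g ω) ∂μ
      = ∫⁻ ω, h ω ∂(μ.withDensity fun ω => ENNReal.ofReal (g ω)).trim hm := by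
    rw [lintegral_trim hm hh, lintegral_withDensity_eq_lintegral_mul₀ hg.ennreal_ofReal
      (hh.mono hm le_rfl).aemeasurable]
    simp only [Pi.mul_apply, mul_comm]
  rw [h_trim _ integrable_condExp.aemeasurable, h_trim _ hf.aemeasurable,
    trim_withDensity_ofReal_condExp hm hf hf₀]

theorem integrable_mul_condExp_iff (hm : m ≤ m₀) [SigmaFinite (μ.trim hm)] {W f : Ω → ℝ}
    (hW : StronglyMeasurable[m] W) (hf : Integrable f μ) (hf₀ : 0 ≤ᵐ[μ] f) :
    Integrable (W * μ[f | m]) μ ↔ Integrable (W * f) μ := by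
  have h_enorm {g : Ω → ℝ} (hg : 0 ≤ᵐ[μ] g) :
      ∫⁻ ω, ‖(W * g) ω‖ₑ ∂μ = ∫⁻ ω, ‖W ω‖ₑ * ENNReal.ofReal (g ω) ∂μ :=
    lintegral_congr_ae <| by
      filter_upwards [hg] with ω hω
      rw [Pi.mul_apply, enorm_mul, Real.enorm_eq_ofReal hω]
  have hW' : AEStronglyMeasurable W μ := (hW.mono hm).aestronglyMeasurable
  have hW_enorm : Measurable[m] fun ω => ‖W ω‖ₑ :=
    measurable_enorm.comp hW.measurable
  simp only [Integrable, HasFiniteIntegral, h_enorm hf₀, h_enorm (condExp_nonneg hf₀),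
    lintegral_mul_ofReal_condExp hm hW_enorm hf hf₀,
    hW'.mul (stronglyMeasurable_condExp.mono hm).aestronglyMeasurable,
    hW'.mul hf.aestronglyMeasurable, true_and]

theorem condExp_mul_condExp_sub_ae_eq_zero {m₁ m₂ : MeasurableSpace Ω} (hm₁₂ : m₁ ≤ m₂)
    (hm₂ : m₂ ≤ m₀) [SigmaFinite (μ.trim hm₂)] [SigmaFinite (μ.trim (hm₁₂.trans hm₂))]
    {f g W : Ω → ℝ} (hf : Integrable f μ) (hf₀ : 0 ≤ᵐ[μ] f) (hW : StronglyMeasurable[m₁] W)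
    (hWg : W * μ[f | m₁] =ᵐ[μ] μ[g | m₁]) :
    μ[W * μ[f | m₂] - g | m₁] =ᵐ[μ] 0 := by
  have h_int : Integrable (W * μ[f | m₂]) μ :=
    (integrable_mul_condExp_iff hm₂ (hW.mono hm₁₂) hf hf₀).2 <|
      (integrable_mul_condExp_iff (hm₁₂.trans hm₂) hW hf hf₀).1 <|
        integrable_condExp.congr hWg.symm
  by_cases hg : Integrable g μ
  · calc μ[W * μ[f | m₂] - g | m₁]
        =ᵐ[μ] μ[W * μ[f | m₂] | m₁] - μ[g | m₁] := condExp_sub h_int hg m₁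
      _ =ᵐ[μ] W * μ[μ[f | m₂] | m₁] - μ[g | m₁] :=
        (condExp_mul_of_stronglyMeasurable_left hW h_int integrable_condExp).sub
          EventuallyEq.rfl
      _ =ᵐ[μ] W * μ[f | m₁] - μ[g | m₁] :=
        (EventuallyEq.rfl.mul (condExp_condExp_of_le hm₁₂ hm₂)).sub EventuallyEq.rfl
      _ =ᵐ[μ] 0 := by
        filter_upwards [hWg] with ω hω
        simp [hω]
  · rw [condExp_of_not_integrable fun h => hg (by simpa using h_int.sub h)]

end MeasureTheory

theorem stmt_10_general {Ω 𝒳 𝒳k 𝒜 : Type*} [MeasurableSpace Ω] [MeasurableSpace 𝒳]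
    [MeasurableSpace 𝒳k] [DecidableEq 𝒜] [MeasurableSpace 𝒜]
    [MeasurableSingletonClass 𝒜]
    (μ : Measure Ω) [IsProbabilityMeasure μ]
    (X : Ω → 𝒳) (Xk : Ω → 𝒳k) (A : Ω → 𝒜)
    (hX : Measurable X) (hXk : Measurable Xk) (hA : Measurable A)
    (pi0 piθ : 𝒳 → 𝒜 → ℝ) (bpiθ bpi0 : 𝒳k → 𝒜 → ℝ)
    -- current-action sufficiency: π₀(a|X) is a version of P(A = a | X, X⁽ᵏ⁾)
    (hlog : ∀ a : 𝒜, (fun ω => pi0 (X ω) a)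
      =ᵐ[μ] μ[(fun ω => if A ω = a then (1 : ℝ) else 0) |
        MeasurableSpace.comap X inferInstance ⊔ MeasurableSpace.comap Xk inferInstance])
    -- lag marginals
    (hbpiθ : ∀ a : 𝒜, (fun ω => bpiθ (Xk ω) a)
      =ᵐ[μ] μ[(fun ω => piθ (X ω) a) | MeasurableSpace.comap Xk inferInstance])
    (hbpi0 : ∀ a : 𝒜, (fun ω => bpi0 (Xk ω) a)
      =ᵐ[μ] μ[(fun ω => if A ω = a then (1 : ℝ) else 0) |
        MeasurableSpace.comap Xk inferInstance])
    -- lag overlap, and π̄_θ,k vanishes on the event {π̄₀,k = 0}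
    (hzero : ∀ a : 𝒜, ∀ᵐ ω ∂μ, bpi0 (Xk ω) a = 0 → bpiθ (Xk ω) a = 0)
    -- weight with the convention w_k = 0 where π̄₀,k = 0
    (w : 𝒳k → 𝒜 → ℝ)
    (hw : ∀ xk a, w xk a = if bpi0 xk a = 0 then 0 else bpiθ xk a / bpi0 xk a) :
    ∀ a : 𝒜, μ[(fun ω => pi0 (X ω) a * w (Xk ω) a - piθ (X ω) a) |
        MeasurableSpace.comap Xk inferInstance]
      =ᵐ[μ] 0 := by
  intro a
  specialize hlog a
  specialize hbpiθ a
  specialize hbpi0 a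
  specialize hzero a
  set mk := MeasurableSpace.comap Xk inferInstance
  set ind : Ω → ℝ := fun ω => if A ω = a then 1 else 0
  set gθ : Ω → ℝ := fun ω => piθ (X ω) a
  have hind_mem (ω : Ω) : 0 ≤ ind ω ∧ ind ω ≤ 1 := by
    by_cases h : A ω = a <;> simp [ind, h]
  have hind : Integrable ind μ :=
    .of_bound (Measurable.ite (hA (measurableSet_singleton a)) measurable_const
      measurable_const).aestronglyMeasurable 1
      (ae_of_all _ fun ω => (Real.norm_of_nonneg (hind_mem ω).1).trans_le (hind_mem ω).2)
  have hind₀ : 0 ≤ᵐ[μ] ind := ae_of_all _ fun ω => (hind_mem ω).1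
  -- with `x / 0 = 0`, the convention `w_k = 0` on `{π̄₀,k = 0}` is plain division
  have hw_div (xk : 𝒳k) : w xk a = bpiθ xk a / bpi0 xk a := by
    rw [hw]; split_ifs with h <;> simp [h]
  have hW : StronglyMeasurable[mk] (μ[gθ | mk] / μ[ind | mk]) :=
    stronglyMeasurable_condExp.div stronglyMeasurable_condExp
  have hWg : μ[gθ | mk] / μ[ind | mk] * μ[ind | mk] =ᵐ[μ] μ[gθ | mk] := by
    filter_upwards [hzero, hbpi0, hbpiθ] with ω hz h0 hθ
    exact div_mul_cancel_of_imp fun h => hθ ▸ hz (h0.trans h)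
  have h_integrand : (fun ω => pi0 (X ω) a * w (Xk ω) a - gθ ω)
      =ᵐ[μ] μ[gθ | mk] / μ[ind | mk]
        * μ[ind | MeasurableSpace.comap X inferInstance ⊔ mk] - gθ := by
    filter_upwards [hlog, hbpi0, hbpiθ] with ω h h0 hθ
    simp only [Pi.sub_apply, Pi.mul_apply, Pi.div_apply, hw_div, h, h0, hθ]
    ring
  exact (condExp_congr_ae h_integrand).trans <|
    condExp_mul_condExp_sub_ae_eq_zero le_sup_right (sup_le hX.comap_le hXk.comap_le)
      hind hind₀ hW hWg

/-- Under current-action sufficiency and lag overlap (with `w_k = 0` and `π̄_θ,k = 0` on the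
event `π̄₀,k = 0`), for each action `a`,
`E[π₀(a|X)·w_k(X⁽ᵏ⁾,a) − π_θ(a|X) | X⁽ᵏ⁾] = 0` a.s. -/
theorem stmt_10 {Ω 𝒳 𝒳k 𝒜 : Type*} [MeasurableSpace Ω] [MeasurableSpace 𝒳]
    [MeasurableSpace 𝒳k] [Fintype 𝒜] [DecidableEq 𝒜] [MeasurableSpace 𝒜]
    [MeasurableSingletonClass 𝒜]
    (μ : Measure Ω) [IsProbabilityMeasure μ]
    (X : Ω → 𝒳) (Xk : Ω → 𝒳k) (A : Ω → 𝒜)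
    (hX : Measurable X) (hXk : Measurable Xk) (hA : Measurable A)
    (pi0 piθ : 𝒳 → 𝒜 → ℝ) (bpiθ bpi0 : 𝒳k → 𝒜 → ℝ)
    -- current-action sufficiency: π₀(a|X) is a version of P(A = a | X, X⁽ᵏ⁾)
    (hlog : ∀ a : 𝒜, (fun ω => pi0 (X ω) a)
      =ᵐ[μ] μ[(fun ω => if A ω = a then (1 : ℝ) else 0) |
        MeasurableSpace.comap X inferInstance ⊔ MeasurableSpace.comap Xk inferInstance])
    -- lag marginals
    (hbpiθ : ∀ a : 𝒜, (fun ω => bpiθ (Xk ω) a)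
      =ᵐ[μ] μ[(fun ω => piθ (X ω) a) | MeasurableSpace.comap Xk inferInstance])
    (hbpi0 : ∀ a : 𝒜, (fun ω => bpi0 (Xk ω) a)
      =ᵐ[μ] μ[(fun ω => if A ω = a then (1 : ℝ) else 0) |
        MeasurableSpace.comap Xk inferInstance])
    -- lag overlap, and π̄_θ,k vanishes on the event {π̄₀,k = 0}
    (hoverlap : ∀ a : 𝒜, ∀ᵐ ω ∂μ, 0 < bpiθ (Xk ω) a → 0 < bpi0 (Xk ω) a)
    (hzero : ∀ a : 𝒜, ∀ᵐ ω ∂μ, bpi0 (Xk ω) a = 0 → bpiθ (Xk ω) a = 0)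
    -- weight with the convention w_k = 0 where π̄₀,k = 0
    (w : 𝒳k → 𝒜 → ℝ)
    (hw : ∀ xk a, w xk a = if bpi0 xk a = 0 then 0 else bpiθ xk a / bpi0 xk a) :
    ∀ a : 𝒜, μ[(fun ω => pi0 (X ω) a * w (Xk ω) a - piθ (X ω) a) |
        MeasurableSpace.comap Xk inferInstance]
      =ᵐ[μ] 0 :=
  stmt_10_general μ X Xk A hX hXk hA pi0 piθ bpiθ bpi0 hlog hbpiθ hbpi0 hzero w hw
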